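/- arXiv:2006.12749 — 4 statements merged into one kernel-verified Lean document; each statement's English description precedes it below -/
import Mathlib

section
/- One-step improvement inequality (inequality (26) in the proof of Lemma 2): let π and π' be policies such that for every state s, J_π(π', s) ≥ J_π(π, s). Then q^d_π(s,a) ≤ (T^{π'} q^d_π)(s,a) for all state-action pairs (s,a). -/
open Finset Filter Topology

def IsPolicy {S A : Type*} [Fintype A] (pi : S → A → ℝ) : Prop :=
  (∀ s a, 0 ≤ pi s a) ∧ (∀ s, ∑ a, pi s a = 1)

def IsKernel {S A : Type*} [Fintype S] (p : S → A → S → ℝ) : Prop :=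
  (∀ s a s', 0 ≤ p s a s') ∧ (∀ s a, ∑ s', p s a s' = 1)

noncomputable def klPen {S A : Type*} [Fintype A]
    (πb π : S → A → ℝ) (s : S) : ℝ :=
  ∑ a, π s a * Real.log (π s a / πb s a)

noncomputable def bellman {S A : Type*} [Fintype S] [Fintype A]
    (p : S → A → S → ℝ) (r : S → A → ℝ) (γ τ : ℝ) (πb π : S → A → ℝ)
    (q : S × A → ℝ) : S × A → ℝ :=
  fun sa => r sa.1 sa.2 + γ * ∑ s', p sa.1 sa.2 s' *
    ((∑ a', π s' a' * q (s', a')) - τ * klPen πb π s')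

noncomputable def supNorm {X : Type*} [Fintype X] [Nonempty X] (f : X → ℝ) : ℝ :=
  Finset.univ.sup' Finset.univ_nonempty (fun x => |f x|)

noncomputable def Jobj {S A : Type*} [Fintype A]
    (τ : ℝ) (πb : S → A → ℝ) (qd : S × A → ℝ) (πt : S → A → ℝ) (s : S) : ℝ :=
  (∑ a, πt s a * qd (s, a)) - τ * klPen πb πt s

theorem bellman_eq_sum_Jobj {S A : Type*} [Fintype S] [Fintype A]
    (p : S → A → S → ℝ) (r : S → A → ℝ) (γ τ : ℝ) (πb π : S → A → ℝ)
    (q : S × A → ℝ) (sa : S × A) :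
    bellman p r γ τ πb π q sa = r sa.1 sa.2 + γ * ∑ s', p sa.1 sa.2 s' * Jobj τ πb q π s' :=
  rfl

theorem bellman_mono_of_Jobj_le {S A : Type*} [Fintype S] [Fintype A]
    (p : S → A → S → ℝ) (hp : ∀ s a s', 0 ≤ p s a s') (r : S → A → ℝ) {γ : ℝ} (hγ : 0 ≤ γ)
    (τ : ℝ) (πb : S → A → ℝ) {π π' : S → A → ℝ} (q : S × A → ℝ)
    (hJ : ∀ s, Jobj τ πb q π s ≤ Jobj τ πb q π' s) (sa : S × A) :
    bellman p r γ τ πb π q sa ≤ bellman p r γ τ πb π' q sa := by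
  rw [bellman_eq_sum_Jobj, bellman_eq_sum_Jobj]
  gcongr with s' _
  · exact hp _ _ _
  · exact hJ s'

theorem stmt7_general {S A : Type*} [Fintype S] [Fintype A]
    (p : S → A → S → ℝ) (hp : IsKernel p)
    (r : S → A → ℝ) (γ τ : ℝ) (hγ0 : 0 ≤ γ)
    (πb : S → A → ℝ)
    (π : S → A → ℝ)
    (π' : S → A → ℝ)
    (qd : S × A → ℝ) (hqd : bellman p r γ τ πb π qd = qd)
    (himp : ∀ s : S, Jobj τ πb qd π s ≤ Jobj τ πb qd π' s) :
    ∀ sa : S × A, qd sa ≤ bellman p r γ τ πb π' qd sa := by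
  intro sa
  calc qd sa = bellman p r γ τ πb π qd sa := by rw [hqd]
    _ ≤ bellman p r γ τ πb π' qd sa := bellman_mono_of_Jobj_le p hp.1 r hγ0 τ πb qd himp sa

theorem stmt7 {S A : Type*} [Fintype S] [Fintype A] [Nonempty S] [Nonempty A]
    (p : S → A → S → ℝ) (hp : IsKernel p)
    (r : S → A → ℝ) (γ τ : ℝ) (hγ0 : 0 ≤ γ) (hγ1 : γ < 1) (hτ : 0 ≤ τ)
    (πb : S → A → ℝ) (hπb : IsPolicy πb) (hπbpos : ∀ s a, 0 < πb s a)
    (π : S → A → ℝ) (hπ : IsPolicy π)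
    (π' : S → A → ℝ) (hπ' : IsPolicy π')
    (qd : S × A → ℝ) (hqd : bellman p r γ τ πb π qd = qd)
    (himp : ∀ s : S, Jobj τ πb qd π s ≤ Jobj τ πb qd π' s) :
    ∀ sa : S × A, qd sa ≤ bellman p r γ τ πb π' qd sa :=
  stmt7_general p hp r γ τ hγ0 πb π π' qd hqd himp
end

section
/- Batch-Constrained Soft Policy Improvement (Lemma 2): let π be a policy and let π' be a policy that maximizes the improvement objective of π at every state, i.e., for every state s and every policy π̃, J_π(π', s) ≥ J_π(π̃, s). Then q^d_{π'}(s,a) ≥ q^d_π(s,a) for all state-action pairs (s,a). -/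
open Finset Filter Topology

/-
Writing `T^π` for the soft Bellman operator of `π`, the inner term of `T^π q` at `s'` is exactly
the improvement objective `J(π, s')` built from `q`. Since `π'` maximizes `J_π` at every state,
`q^d_π = T^π q^d_π ≤ T^{π'} q^d_π`. On the other hand `T^{π'}` is monotone and shifts a constant
bound on `q - q'` by the factor `γ`, so if `M` is the largest value of `q^d_π - q^d_{π'}`, then
`M ≤ γ M`, whence `M ≤ 0`.
-/

theorem sum_mul_le_of_le {ι : Type*} [Fintype ι] {w f : ι → ℝ} {M : ℝ}
    (hw : ∀ i, 0 ≤ w i) (hw1 : ∑ i, w i = 1) (hf : ∀ i, f i ≤ M) :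
    ∑ i, w i * f i ≤ M :=
  calc ∑ i, w i * f i ≤ ∑ i, w i * M :=
        sum_le_sum fun i _ => mul_le_mul_of_nonneg_left (hf i) (hw i)
    _ = M := by rw [← sum_mul, hw1, one_mul]

section Bellman

variable {S A : Type*} [Fintype S] [Fintype A]
  {p : S → A → S → ℝ} {r : S → A → ℝ} {γ τ : ℝ} {πb : S → A → ℝ}

theorem bellman_eq_sum_jobj (π : S → A → ℝ) (q : S × A → ℝ) (sa : S × A) :
    bellman p r γ τ πb π q sa = r sa.1 sa.2 + γ * ∑ s', p sa.1 sa.2 s' * Jobj τ πb q π s' :=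
  rfl

theorem bellman_le_bellman_of_jobj_le (hp : IsKernel p) (hγ : 0 ≤ γ) {π π' : S → A → ℝ}
    {q : S × A → ℝ} (hJ : ∀ s, Jobj τ πb q π s ≤ Jobj τ πb q π' s) (sa : S × A) :
    bellman p r γ τ πb π q sa ≤ bellman p r γ τ πb π' q sa := by
  simp only [bellman_eq_sum_jobj]
  gcongr with s' _
  · exact hp.1 _ _ _
  · exact hJ s'

theorem bellman_sub_bellman (π : S → A → ℝ) (q q' : S × A → ℝ) (sa : S × A) :
    bellman p r γ τ πb π q sa - bellman p r γ τ πb π q' sa =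
      γ * ∑ s', p sa.1 sa.2 s' * ∑ a', π s' a' * (q (s', a') - q' (s', a')) := by
  simp only [bellman, mul_sub, sum_sub_distrib]
  ring

theorem bellman_sub_bellman_le (hp : IsKernel p) (hγ : 0 ≤ γ) {π : S → A → ℝ}
    (hπ : IsPolicy π) {q q' : S × A → ℝ} {M : ℝ} (hM : ∀ sa, q sa - q' sa ≤ M) (sa : S × A) :
    bellman p r γ τ πb π q sa - bellman p r γ τ πb π q' sa ≤ γ * M := by
  rw [bellman_sub_bellman]
  gcongr
  exact sum_mul_le_of_le (hp.1 _ _) (hp.2 _ _) fun s' =>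
    sum_mul_le_of_le (hπ.1 s') (hπ.2 s') fun a' => hM (s', a')

theorem le_of_le_bellman_of_bellman_eq (hp : IsKernel p) (hγ0 : 0 ≤ γ) (hγ1 : γ < 1)
    {π : S → A → ℝ} (hπ : IsPolicy π) {q q' : S × A → ℝ}
    (hq : ∀ sa, q sa ≤ bellman p r γ τ πb π q sa) (hq' : bellman p r γ τ πb π q' = q')
    (sa : S × A) : q sa ≤ q' sa := by
  have : Nonempty (S × A) := ⟨sa⟩
  obtain ⟨m, hm⟩ := Finite.exists_max fun x => q x - q' x
  have hmax : q m - q' m ≤ γ * (q m - q' m) := by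
    have := bellman_sub_bellman_le (r := r) (τ := τ) (πb := πb) hp hγ0 hπ hm m
    rw [hq'] at this
    linarith [hq m]
  nlinarith [hm sa]

end Bellman

theorem stmt8_general {S A : Type*} [Fintype S] [Fintype A]
    (p : S → A → S → ℝ) (hp : IsKernel p)
    (r : S → A → ℝ) (γ τ : ℝ) (hγ0 : 0 ≤ γ) (hγ1 : γ < 1)
    (πb : S → A → ℝ)
    (π : S → A → ℝ) (hπ : IsPolicy π)
    (π' : S → A → ℝ) (hπ' : IsPolicy π')
    (qd : S × A → ℝ) (hqd : bellman p r γ τ πb π qd = qd)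
    (qd' : S × A → ℝ) (hqd' : bellman p r γ τ πb π' qd' = qd')
    (hmax : ∀ s : S, ∀ πt : S → A → ℝ, IsPolicy πt →
      Jobj τ πb qd πt s ≤ Jobj τ πb qd π' s) :
    ∀ sa : S × A, qd sa ≤ qd' sa := by
  have hsub : ∀ sa, qd sa ≤ bellman p r γ τ πb π' qd sa := by
    simpa only [hqd] using bellman_le_bellman_of_jobj_le (r := r) hp hγ0 fun s => hmax s π hπ
  exact le_of_le_bellman_of_bellman_eq hp hγ0 hγ1 hπ' hsub hqd'

theorem stmt8 {S A : Type*} [Fintype S] [Fintype A] [Nonempty S] [Nonempty A]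
    (p : S → A → S → ℝ) (hp : IsKernel p)
    (r : S → A → ℝ) (γ τ : ℝ) (hγ0 : 0 ≤ γ) (hγ1 : γ < 1) (hτ : 0 ≤ τ)
    (πb : S → A → ℝ) (hπb : IsPolicy πb) (hπbpos : ∀ s a, 0 < πb s a)
    (π : S → A → ℝ) (hπ : IsPolicy π)
    (π' : S → A → ℝ) (hπ' : IsPolicy π')
    (qd : S × A → ℝ) (hqd : bellman p r γ τ πb π qd = qd)
    (qd' : S × A → ℝ) (hqd' : bellman p r γ τ πb π' qd' = qd')
    (hmax : ∀ s : S, ∀ πt : S → A → ℝ, IsPolicy πt →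
      Jobj τ πb qd πt s ≤ Jobj τ πb qd π' s) :
    ∀ sa : S × A, qd sa ≤ qd' sa :=
  stmt8_general p hp r γ τ hγ0 hγ1 πb π hπ π' hπ' qd hqd qd' hqd' hmax
end

section
/- Convergence of batch-constrained soft policy iteration (convergence part of Theorem 1): suppose π^b s a ≥ ε for all s, a, where 0 < ε ≤ 1, and let (π^k)_{k∈ℕ} be a sequence of policies such that for every k, every state s, and every policy π̃, J_{π^k}(π^{k+1}, s) ≥ J_{π^k}(π̃, s). Then for every state-action pair (s,a), the real sequence k ↦ q^d_{π^k}(s,a) converges (it is nondecreasing and bounded above). -/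
open Finset Filter Topology

-- x * log x ≥ x - 1 for x ≥ 0
lemma aux_mul_log_ge {x : ℝ} (hx : 0 ≤ x) : x - 1 ≤ x * Real.log x := by
  rcases eq_or_lt_of_le hx with h | h
  · simp [← h]
  · have h1 : Real.log (1 / x) ≤ 1 / x - 1 := Real.log_le_sub_one_of_pos (by positivity)
    rw [Real.log_div one_ne_zero (ne_of_gt h), Real.log_one] at h1
    have := mul_le_mul_of_nonneg_left h1 hx
    have hxx : x * (1 / x) = 1 := by field_simp
    nlinarith [this, hxx]

lemma klPen_bounds {S A : Type*} [Fintype A]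
    (πb π : S → A → ℝ) (hπb : IsPolicy πb) (hπbpos : ∀ s a, 0 < πb s a)
    (ε : ℝ) (hε0 : 0 < ε) (hε1 : ε ≤ 1) (hπbε : ∀ s a, ε ≤ πb s a)
    (hπ : IsPolicy π) (s : S) :
    -(Fintype.card A : ℝ) ≤ klPen πb π s ∧ klPen πb π s ≤ -Real.log ε := by
  have hπle1 : ∀ a, π s a ≤ 1 := by
    intro a
    calc π s a ≤ ∑ a', π s a' := Finset.single_le_sum (fun i _ => hπ.1 s i) (mem_univ a)
    _ = 1 := hπ.2 s
  have hπble1 : ∀ a, πb s a ≤ 1 := by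
    intro a
    calc πb s a ≤ ∑ a', πb s a' := Finset.single_le_sum (fun i _ => hπb.1 s i) (mem_univ a)
    _ = 1 := hπb.2 s
  constructor
  · have : ∀ a ∈ Finset.univ, (-1 : ℝ) ≤ π s a * Real.log (π s a / πb s a) := by
      intro a _
      rcases eq_or_lt_of_le (hπ.1 s a) with h | h
      · simp [← h]
      · rw [Real.log_div (ne_of_gt h) (ne_of_gt (hπbpos s a)), mul_sub]
        have h1 : π s a - 1 ≤ π s a * Real.log (π s a) := aux_mul_log_ge (le_of_lt h)
        have h2 : π s a * Real.log (πb s a) ≤ 0 :=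
          mul_nonpos_of_nonneg_of_nonpos (le_of_lt h)
            (Real.log_nonpos (le_of_lt (hπbpos s a)) (hπble1 a))
        nlinarith
    have := Finset.sum_le_sum this
    simpa [klPen, Finset.card_univ] using this
  · have : ∀ a ∈ Finset.univ, π s a * Real.log (π s a / πb s a) ≤ π s a * (-Real.log ε) := by
      intro a _
      rcases eq_or_lt_of_le (hπ.1 s a) with h | h
      · simp [← h]
      · apply mul_le_mul_of_nonneg_left _ (le_of_lt h)
        rw [Real.log_div (ne_of_gt h) (ne_of_gt (hπbpos s a))]
        have h1 : Real.log (π s a) ≤ 0 := Real.log_nonpos (le_of_lt h) (hπle1 a)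
        have h2 : Real.log ε ≤ Real.log (πb s a) := Real.log_le_log hε0 (hπbε s a)
        linarith
    calc klPen πb π s ≤ ∑ a, π s a * (-Real.log ε) := Finset.sum_le_sum this
    _ = -Real.log ε := by rw [← Finset.sum_mul, hπ.2 s, one_mul]

theorem stmt12 {S A : Type*} [Fintype S] [Fintype A] [Nonempty S] [Nonempty A]
    (p : S → A → S → ℝ) (hp : IsKernel p)
    (r : S → A → ℝ) (γ τ : ℝ) (hγ0 : 0 ≤ γ) (hγ1 : γ < 1) (hτ : 0 ≤ τ)
    (πb : S → A → ℝ) (hπb : IsPolicy πb) (hπbpos : ∀ s a, 0 < πb s a)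
    (ε : ℝ) (hε0 : 0 < ε) (hε1 : ε ≤ 1) (hπbε : ∀ s a, ε ≤ πb s a)
    (πk : ℕ → S → A → ℝ) (hπk : ∀ k, IsPolicy (πk k))
    (qd : ℕ → S × A → ℝ) (hqd : ∀ k, bellman p r γ τ πb (πk k) (qd k) = qd k)
    (hmax : ∀ k, ∀ s : S, ∀ πt : S → A → ℝ, IsPolicy πt →
      Jobj τ πb (qd k) πt s ≤ Jobj τ πb (qd k) (πk (k + 1)) s) :
    ∀ sa : S × A, ∃ L : ℝ, Tendsto (fun k => qd k sa) atTop (𝓝 L) := by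
  -- uniform KL bound
  set K : ℝ := (Fintype.card A : ℝ) - Real.log ε with hK
  have hKnn : 0 ≤ K := by
    have h1 : Real.log ε ≤ 0 := Real.log_nonpos (le_of_lt hε0) hε1
    have h2 : (0:ℝ) ≤ (Fintype.card A : ℝ) := Nat.cast_nonneg _
    linarith
  have hklabs : ∀ k s, |klPen πb (πk k) s| ≤ K := by
    intro k s
    obtain ⟨h1, h2⟩ := klPen_bounds πb (πk k) hπb hπbpos ε hε0 hε1 hπbε (hπk k) s
    have hl : Real.log ε ≤ 0 := Real.log_nonpos (le_of_lt hε0) hε1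
    have hc : (0:ℝ) ≤ (Fintype.card A : ℝ) := Nat.cast_nonneg _
    rw [abs_le]
    constructor <;> [linarith; linarith]
  -- uniform bound on qd
  set R : ℝ := supNorm (fun sa : S × A => r sa.1 sa.2) with hR
  have hRb : ∀ sa : S × A, |r sa.1 sa.2| ≤ R := fun sa =>
    Finset.le_sup' (f := fun x : S × A => |r x.1 x.2|) (mem_univ sa)
  set M : ℝ := (R + γ * τ * K) / (1 - γ) with hM
  have hbdd : ∀ k sa, |qd k sa| ≤ M := by
    intro k sa
    set N : ℝ := supNorm (qd k) with hN
    have hNb : ∀ sa : S × A, |qd k sa| ≤ N := fun sa =>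
      Finset.le_sup' (f := fun x : S × A => |qd k x|) (mem_univ sa)
    have key : ∀ sa : S × A, |qd k sa| ≤ R + γ * (N + τ * K) := by
      intro sa
      rw [← hqd k]
      show |r sa.1 sa.2 + γ * ∑ s', p sa.1 sa.2 s' *
        ((∑ a', πk k s' a' * qd k (s', a')) - τ * klPen πb (πk k) s')| ≤ _
      have hinner : ∀ s' : S, |(∑ a', πk k s' a' * qd k (s', a')) -
          τ * klPen πb (πk k) s'| ≤ N + τ * K := by
        intro s'
        have h1 : |∑ a', πk k s' a' * qd k (s', a')| ≤ N := by
          calc |∑ a', πk k s' a' * qd k (s', a')| ≤ ∑ a', |πk k s' a' * qd k (s', a')| :=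
                Finset.abs_sum_le_sum_abs _ _
          _ ≤ ∑ a', πk k s' a' * N := by
                apply Finset.sum_le_sum
                intro a _
                rw [abs_mul, abs_of_nonneg ((hπk k).1 s' a)]
                exact mul_le_mul_of_nonneg_left (hNb _) ((hπk k).1 s' a)
          _ = N := by rw [← Finset.sum_mul, (hπk k).2 s', one_mul]
        have h2 : |τ * klPen πb (πk k) s'| ≤ τ * K := by
          rw [abs_mul, abs_of_nonneg hτ]
          exact mul_le_mul_of_nonneg_left (hklabs k s') hτ
        calc _ ≤ |∑ a', πk k s' a' * qd k (s', a')| + |τ * klPen πb (πk k) s'| :=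
              abs_sub _ _
        _ ≤ N + τ * K := add_le_add h1 h2
      have hsum : |∑ s', p sa.1 sa.2 s' *
          ((∑ a', πk k s' a' * qd k (s', a')) - τ * klPen πb (πk k) s')| ≤ N + τ * K := by
        calc _ ≤ ∑ s', |p sa.1 sa.2 s' *
              ((∑ a', πk k s' a' * qd k (s', a')) - τ * klPen πb (πk k) s')| :=
              Finset.abs_sum_le_sum_abs _ _
        _ ≤ ∑ s', p sa.1 sa.2 s' * (N + τ * K) := by
              apply Finset.sum_le_sum
              intro s' _
              rw [abs_mul, abs_of_nonneg (hp.1 sa.1 sa.2 s')]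
              exact mul_le_mul_of_nonneg_left (hinner s') (hp.1 sa.1 sa.2 s')
        _ = N + τ * K := by rw [← Finset.sum_mul, hp.2 sa.1 sa.2, one_mul]
      calc _ ≤ |r sa.1 sa.2| + |γ * ∑ s', p sa.1 sa.2 s' *
            ((∑ a', πk k s' a' * qd k (s', a')) - τ * klPen πb (πk k) s')| := abs_add_le _ _
      _ ≤ R + γ * (N + τ * K) := by
            rw [abs_mul, abs_of_nonneg hγ0]
            exact add_le_add (hRb sa) (mul_le_mul_of_nonneg_left hsum hγ0)
    have hNle : N ≤ R + γ * (N + τ * K) := by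
      apply Finset.sup'_le
      intro x _
      exact key x
    have hτK : 0 ≤ τ * K := mul_nonneg hτ hKnn
    have hNM : N ≤ M := by
      rw [hM, le_div_iff₀ (by linarith)]
      nlinarith
    exact le_trans (hNb sa) hNM
  -- monotonicity
  have hmono : ∀ k sa, qd k sa ≤ qd (k + 1) sa := by
    intro k
    set d : S × A → ℝ := fun sa => qd (k + 1) sa - qd k sa with hd
    set m : ℝ := Finset.univ.inf' Finset.univ_nonempty d with hm
    have hmd : ∀ sa : S × A, m ≤ d sa := fun sa => Finset.inf'_le d (mem_univ sa)
    obtain ⟨sa₀, _, hsa₀⟩ := Finset.exists_mem_eq_inf' (Finset.univ_nonempty) d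
    have hJ : ∀ s' : S, Jobj τ πb (qd k) (πk k) s' ≤ Jobj τ πb (qd k) (πk (k+1)) s' :=
      fun s' => hmax k s' (πk k) (hπk k)
    have hstep : ∀ sa : S × A, γ * m ≤ d sa := by
      intro sa
      have hq1 : qd (k+1) sa = r sa.1 sa.2 + γ * ∑ s', p sa.1 sa.2 s' *
          ((∑ a', πk (k+1) s' a' * qd (k+1) (s', a')) - τ * klPen πb (πk (k+1)) s') := by
        conv_lhs => rw [← hqd (k+1)]
        rfl
      have hq0 : qd k sa = r sa.1 sa.2 + γ * ∑ s', p sa.1 sa.2 s' *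
          ((∑ a', πk k s' a' * qd k (s', a')) - τ * klPen πb (πk k) s') := by
        conv_lhs => rw [← hqd k]
        rfl
      -- lower bound d sa
      have hpt : ∀ s' : S,
          ((∑ a', πk (k+1) s' a' * qd (k+1) (s', a')) - τ * klPen πb (πk (k+1)) s') -
          ((∑ a', πk k s' a' * qd k (s', a')) - τ * klPen πb (πk k) s') ≥ m := by
        intro s'
        have h1 : (∑ a', πk k s' a' * qd k (s', a')) - τ * klPen πb (πk k) s' ≤
            (∑ a', πk (k+1) s' a' * qd k (s', a')) - τ * klPen πb (πk (k+1)) s' := hJ s'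
        have h2 : (∑ a', πk (k+1) s' a' * qd (k+1) (s', a')) -
            (∑ a', πk (k+1) s' a' * qd k (s', a')) ≥ m := by
          rw [← Finset.sum_sub_distrib]
          have : ∀ a' ∈ Finset.univ, πk (k+1) s' a' * m ≤
              πk (k+1) s' a' * qd (k+1) (s', a') - πk (k+1) s' a' * qd k (s', a') := by
            intro a _
            rw [← mul_sub]
            exact mul_le_mul_of_nonneg_left (hmd (s', a)) ((hπk (k+1)).1 s' a)
          have hs := Finset.sum_le_sum this
          rw [← Finset.sum_mul, (hπk (k+1)).2 s', one_mul] at hs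
          exact hs
        linarith
      have hsum : ∑ s', p sa.1 sa.2 s' *
            ((∑ a', πk (k+1) s' a' * qd (k+1) (s', a')) - τ * klPen πb (πk (k+1)) s') -
          ∑ s', p sa.1 sa.2 s' *
            ((∑ a', πk k s' a' * qd k (s', a')) - τ * klPen πb (πk k) s') ≥ m := by
        rw [← Finset.sum_sub_distrib]
        have : ∀ s' ∈ Finset.univ, p sa.1 sa.2 s' * m ≤
            p sa.1 sa.2 s' * ((∑ a', πk (k+1) s' a' * qd (k+1) (s', a')) -
              τ * klPen πb (πk (k+1)) s') -
            p sa.1 sa.2 s' * ((∑ a', πk k s' a' * qd k (s', a')) -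
              τ * klPen πb (πk k) s') := by
          intro s' _
          rw [← mul_sub]
          exact mul_le_mul_of_nonneg_left (hpt s') (hp.1 sa.1 sa.2 s')
        have hs := Finset.sum_le_sum this
        rw [← Finset.sum_mul, hp.2 sa.1 sa.2, one_mul] at hs
        exact hs
      have : d sa = γ * (∑ s', p sa.1 sa.2 s' *
            ((∑ a', πk (k+1) s' a' * qd (k+1) (s', a')) - τ * klPen πb (πk (k+1)) s') -
          ∑ s', p sa.1 sa.2 s' *
            ((∑ a', πk k s' a' * qd k (s', a')) - τ * klPen πb (πk k) s')) := by
        rw [hd]; simp only; rw [hq1, hq0]; ring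
      rw [this]
      exact mul_le_mul_of_nonneg_left hsum hγ0
    have hmeq : m = d sa₀ := hm.trans hsa₀
    have hmγ : γ * m ≤ m := (hstep sa₀).trans_eq hmeq.symm
    have hm0 : 0 ≤ m := by nlinarith
    intro sa
    have := le_trans hm0 (hmd sa)
    simpa [hd] using this
  intro sa
  have hMono : Monotone (fun k => qd k sa) := monotone_nat_of_le_succ (fun k => hmono k sa)
  have hBdd : BddAbove (Set.range (fun k => qd k sa)) := by
    refine ⟨M, ?_⟩
    rintro x ⟨k, rfl⟩
    exact le_trans (le_abs_self _) (hbdd k sa)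
  exact ⟨_, tendsto_atTop_ciSup hMono hBdd⟩
end

section
/- Off-policy policy-gradient identity (the derivation of equation (27)): under the differentiable policy family assumptions, fix q : A → ℝ, b : A → ℝ, and τ ∈ ℝ, and define F : ℝ → ℝ by F(θ) = ∑_a π(θ, a) · ( q a − τ · ( log(π(θ, a)) − b a ) ). Then F has derivative ∑_a π(θ₀, a) · (d a / π(θ₀, a)) · ( q a − τ · ( log(π(θ₀, a)) − b a ) ) at θ₀; i.e., the gradient of the KL-regularized expected value equals the expectation under π(θ₀, ·) of the score times ( q a − τ(log π(θ₀, a) − b a) ). -/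
open Finset

/-!
Differentiating `π log π` produces, besides the score term `π' log π`, the extra term `π'`.
Its sum over the actions is the derivative of `∑ a, π θ a = 1`, hence vanishes, and what
remains is `∑ a, π' a · (q a - τ (log π a - b a))`, written in score form as
`π · (π' / π) · (…)`.
-/

theorem sum_hasDerivAt_eq_zero_of_sum_const {ι 𝕜 F : Type*} [NontriviallyNormedField 𝕜]
    [NormedAddCommGroup F] [NormedSpace 𝕜 F] (s : Finset ι) {f : ι → 𝕜 → F} {f' : ι → F}
    {x : 𝕜} {c : F} (hf : ∀ i ∈ s, HasDerivAt (f i) (f' i) x) (hc : ∀ y, ∑ i ∈ s, f i y = c) :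
    ∑ i ∈ s, f' i = 0 := by
  have hsum : HasDerivAt (fun y => ∑ i ∈ s, f i y) (∑ i ∈ s, f' i) x := HasDerivAt.fun_sum hf
  simp only [hc] at hsum
  exact hsum.unique (hasDerivAt_const x c)

theorem HasDerivAt.mul_sub_mul_log_sub {f : ℝ → ℝ} {f' x : ℝ} (hf : HasDerivAt f f' x)
    (hx : f x ≠ 0) (q b τ : ℝ) :
    HasDerivAt (fun y => f y * (q - τ * (Real.log (f y) - b)))
      (f' * (q - τ * (Real.log (f x) - b)) - τ * f') x := by
  have hreg : HasDerivAt (fun y => q - τ * (Real.log (f y) - b)) (-(τ * (f' / f x))) x :=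
    (((hf.log hx).sub_const b).const_mul τ).const_sub q
  refine (hf.mul hreg).congr_deriv ?_
  field_simp
  ring

theorem stmt16_general {A : Type*} [Fintype A]
    (π : ℝ → A → ℝ) (hpos : ∀ θ a, 0 < π θ a) (hsum : ∀ θ, ∑ a, π θ a = 1)
    (θ₀ : ℝ) (d : A → ℝ) (hd : ∀ a, HasDerivAt (fun θ => π θ a) (d a) θ₀)
    (q b : A → ℝ) (τ : ℝ) :
    HasDerivAt (fun θ => ∑ a, π θ a * (q a - τ * (Real.log (π θ a) - b a)))
      (∑ a, π θ₀ a * (d a / π θ₀ a) * (q a - τ * (Real.log (π θ₀ a) - b a))) θ₀ := by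
  have hd_sum : ∑ a, d a = 0 :=
    sum_hasDerivAt_eq_zero_of_sum_const univ (fun a _ => hd a) hsum
  have hterm a := (hd a).mul_sub_mul_log_sub (hpos θ₀ a).ne' (q a) (b a) τ
  refine (HasDerivAt.fun_sum (u := univ) fun a _ => hterm a).congr_deriv ?_
  rw [sum_sub_distrib, ← mul_sum, hd_sum, mul_zero, sub_zero]
  refine sum_congr rfl fun a _ => ?_
  rw [mul_div_cancel₀ _ (hpos θ₀ a).ne']

theorem stmt16 {A : Type*} [Fintype A] [Nonempty A]
    (π : ℝ → A → ℝ) (hpos : ∀ θ a, 0 < π θ a) (hsum : ∀ θ, ∑ a, π θ a = 1)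
    (θ₀ : ℝ) (d : A → ℝ) (hd : ∀ a, HasDerivAt (fun θ => π θ a) (d a) θ₀)
    (q b : A → ℝ) (τ : ℝ) :
    HasDerivAt (fun θ => ∑ a, π θ a * (q a - τ * (Real.log (π θ a) - b a)))
      (∑ a, π θ₀ a * (d a / π θ₀ a) * (q a - τ * (Real.log (π θ₀ a) - b a))) θ₀ :=
  stmt16_general π hpos hsum θ₀ d hd q b τ
end
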